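/- Let ⊢ be a monotone cut-idempotent on 𝖥S, and let ⊨ be the relation on 𝖥(𝖰𝖥S) defined by 𝒮 ⊨ 𝒯 iff ⋀𝒮 ≪ ⋁𝒯 in the complete lattice 𝖰𝖥S (where the meet ⋀𝒮 is the intersection of the members of 𝒮, with ⋀∅ = 𝖥S, the join ⋁𝒯 is (⋃𝒯)↓, and ≪ is the way-below relation of 𝖰𝖥S). Then ⊨ is a cover relation, and ⊢ and ⊨ are Karoubi isomorphic: there exist Karoubi morphisms ⊏ ⊆ 𝖥(𝖰𝖥S) × 𝖥S (i.e. ⊏ = ⊏ • ⊢ = ⊨ • ⊏) and ⊏' ⊆ 𝖥S × 𝖥(𝖰𝖥S) (i.e. ⊏' = ⊏' • ⊨ = ⊢ • ⊏') such that ⊏' • ⊏ = ⊢ and ⊏ • ⊏' = ⊨. -/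

import Mathlib

open scoped Classical

/-! Common definitions: entailment/cover relations on finite subsets,
tight subsets, the tight spectrum, quasi-ideals, and topological notions. -/

/-- `H` is a *selection* of the finite family `𝒢`: it meets every member of `𝒢`. -/
def IsSelection {S : Type*} (𝒢 : Finset (Finset S)) (H : Finset S) : Prop :=
  ∀ I ∈ 𝒢, ∃ x ∈ I, x ∈ H

/-- Cut-composition `r • s` of relations. -/
def CutComp {A B C : Type*} (r : Finset A → Finset B → Prop)
    (s : Finset B → Finset C → Prop) (F : Finset A) (G : Finset C) : Prop :=
  ∃ ℱ 𝒢 : Finset (Finset B),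
    (∀ H ∈ ℱ, r F H) ∧
    (∀ K : Finset B, IsSelection ℱ K → ∃ I ∈ 𝒢, I ⊆ K) ∧
    (∀ I ∈ 𝒢, s I G)

/-- Upper relation: `F ⊢ G ⊆ H` implies `F ⊢ H`. -/
def IsUpperRel {A B : Type*} (r : Finset A → Finset B → Prop) : Prop :=
  ∀ F G H, r F G → G ⊆ H → r F H

/-- Lower relation: `F ⊢ G` and `F ⊆ E` imply `E ⊢ G`. -/
def IsLowerRel {A B : Type*} (r : Finset A → Finset B → Prop) : Prop :=
  ∀ F G E, r F G → F ⊆ E → r E G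

/-- `F ⊢_{1∃} G` iff `F ⊢ {g}` for some `g ∈ G`. -/
def OneExists {A B : Type*} (r : Finset A → Finset B → Prop)
    (F : Finset A) (G : Finset B) : Prop :=
  ∃ g ∈ G, r F {g}

/-- Cut-transitivity: `⊢ • ⊢ ⊆ ⊢`. -/
def CutTransitive {S : Type*} (r : Finset S → Finset S → Prop) : Prop :=
  ∀ F G, CutComp r r F G → r F G

/-- Divisibility: `⊢ ⊆ ⊢ • ⊢_{1∃}`. -/
def Divisible {S : Type*} (r : Finset S → Finset S → Prop) : Prop :=
  ∀ F G, r F G → CutComp r (OneExists r) F G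

/-- A strong idempotent: monotone, cut-transitive and divisible. -/
def StrongIdempotent {S : Type*} (r : Finset S → Finset S → Prop) : Prop :=
  IsUpperRel r ∧ IsLowerRel r ∧ CutTransitive r ∧ Divisible r

/-- Gentzen's cut rule. -/
def CutRel {S : Type*} (r : Finset S → Finset S → Prop) : Prop :=
  ∀ (s : S) (F G : Finset S), r (insert s F) G → r F (insert s G) → r F G

/-- An entailment: a monotone cut relation. -/
def Entailment {S : Type*} (r : Finset S → Finset S → Prop) : Prop :=
  IsUpperRel r ∧ IsLowerRel r ∧ CutRel r

/-- 1-reflexivity: `{s} ⊢ {s}` for all `s`. -/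
def OneReflexive {S : Type*} (r : Finset S → Finset S → Prop) : Prop :=
  ∀ s : S, r {s} {s}

/-- The relation `⊩` induced by `⊢`:
`F ⊩ G` iff every `H` with `H ⊢ {f}` for all `f ∈ F` satisfies `H ⊢ G`. -/
def Vdash {S : Type*} (r : Finset S → Finset S → Prop)
    (F G : Finset S) : Prop :=
  ∀ H : Finset S, (∀ f ∈ F, r H {f}) → r H G

/-- `⊢` is auxiliary to `⊨`. -/
def AuxiliaryTo {S T : Type*} (r : Finset S → Finset T → Prop)
    (v : Finset S → Finset S → Prop) : Prop :=
  ∀ (F H : Finset S) (G : Finset T), (∀ h ∈ H, r (insert h F) G) → v F H → r F G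

/-- `⊢` is dual-auxiliary to `⊨`. -/
def DualAuxiliaryTo {S : Type*} (r v : Finset S → Finset S → Prop) : Prop :=
  ∀ F G H : Finset S, r H G → (∀ h ∈ H, v F (insert h G)) → r F G

/-- A semicut relation: self-dual-auxiliary. -/
def Semicut {S : Type*} (r : Finset S → Finset S → Prop) : Prop :=
  DualAuxiliaryTo r r

/-- A cover relation: a strong idempotent auxiliary to `⊩`. -/
def CoverRelation {S : Type*} (r : Finset S → Finset S → Prop) : Prop :=
  StrongIdempotent r ∧ AuxiliaryTo r (Vdash r)

/-- Tight subset. -/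
def TightSet {S : Type*} (r : Finset S → Finset S → Prop) (T : Set S) : Prop :=
  ∀ G : Finset S, (∃ F : Finset S, ↑F ⊆ T ∧ r F G) ↔ ∃ g ∈ G, g ∈ T

/-- Round subset. -/
def RoundSet {S : Type*} (r : Finset S → Finset S → Prop) (R : Set S) : Prop :=
  ∀ x ∈ R, ∃ F : Finset S, ↑F ⊆ R ∧ r F {x}

/-- Prime subset. -/
def PrimeSet {S : Type*} (r : Finset S → Finset S → Prop) (P : Set S) : Prop :=
  ∀ F G : Finset S, ↑F ⊆ P → r F G → ∃ g ∈ G, g ∈ P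

/-- The tight spectrum: nonempty tight subsets. -/
def TightSpec {S : Type*} (r : Finset S → Finset S → Prop) : Type _ :=
  {T : Set S // TightSet r T ∧ T.Nonempty}

/-- The underlying set of points of an element of the tight spectrum. -/
def TightSpec.pts {S : Type*} {r : Finset S → Finset S → Prop} (T : TightSpec r) : Set S :=
  Subtype.val T

/-- The spectrum topology, generated by the subbasic sets `𝖳_p = {T | p ∈ T}`. -/
instance TightSpec.instTopologicalSpace {S : Type*} (r : Finset S → Finset S → Prop) :
    TopologicalSpace (TightSpec r) :=
  TopologicalSpace.generateFrom (Set.range fun p : S => {T : TightSpec r | p ∈ T.pts})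

/-- `𝖳_F = {T ∈ 𝖳^S : F ⊆ T}`. -/
def TightSpec.TF {S : Type*} (r : Finset S → Finset S → Prop) (F : Finset S) :
    Set (TightSpec r) :=
  {T : TightSpec r | ↑F ⊆ T.pts}

/-- `𝖳^G = {T ∈ 𝖳^S : T ∩ G ≠ ∅}`. -/
def TightSpec.TG {S : Type*} (r : Finset S → Finset S → Prop) (G : Finset S) :
    Set (TightSpec r) :=
  {T : TightSpec r | ∃ g ∈ G, g ∈ T.pts}

/-- `p ⋐ q`: every open cover of `q` has a finite subcover of `p`. -/
def CompactlyContained {X : Type*} [TopologicalSpace X] (p q : Set X) : Prop :=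
  ∀ 𝒰 : Set (Set X), (∀ u ∈ 𝒰, IsOpen u) → q ⊆ ⋃₀ 𝒰 →
    ∃ 𝒱 : Finset (Set X), ↑𝒱 ⊆ 𝒰 ∧ p ⊆ ⋃₀ ↑𝒱

/-- Core compactness. -/
def CoreCompact (X : Type*) [TopologicalSpace X] : Prop :=
  ∀ p : Set X, IsOpen p → ∀ x ∈ p, ∃ q : Set X, IsOpen q ∧ x ∈ q ∧ CompactlyContained q p

/-- Core coherence. -/
def CoreCoherent (X : Type*) [TopologicalSpace X] : Prop :=
  ∀ p q s : Set X, IsOpen p → IsOpen q → IsOpen s →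
    CompactlyContained p q → CompactlyContained p s → CompactlyContained p (q ∩ s)

/-- Sobriety: each irreducible closed set is the closure of a unique point. -/
def SoberSpace (X : Type*) [TopologicalSpace X] : Prop :=
  ∀ C : Set X, IsIrreducible C → IsClosed C → ∃! x : X, C = closure {x}

/-- Stably locally compact: core compact, core coherent and sober. -/
def StablyLocallyCompact (X : Type*) [TopologicalSpace X] : Prop :=
  CoreCompact X ∧ CoreCoherent X ∧ SoberSpace X

/-- The specialisation preorder: `x → y` iff every open set containing `y` contains `x`. -/
def SpecTo {X : Type*} [TopologicalSpace X] (x y : X) : Prop :=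
  ∀ U : Set X, IsOpen U → y ∈ U → x ∈ U

/-- Saturation of a subset. -/
def satOf {X : Type*} [TopologicalSpace X] (D : Set X) : Set X :=
  {x | ∃ y ∈ D, SpecTo x y}

/-- Saturated subsets. -/
def IsSaturatedSet {X : Type*} [TopologicalSpace X] (K : Set X) : Prop :=
  K = satOf K

/-- The patch topology: generated by open sets together with complements of
compact saturated sets. -/
def patchTopology (X : Type*) [TopologicalSpace X] : TopologicalSpace X :=
  TopologicalSpace.generateFrom
    ({U : Set X | IsOpen U} ∪ {V : Set X | ∃ K : Set X, IsCompact K ∧ IsSaturatedSet K ∧ V = Kᶜ})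

/-- Very dense subset: the whole space is both its saturation and its patch-closure. -/
def VeryDense {X : Type*} [TopologicalSpace X] (D : Set X) : Prop :=
  satOf D = Set.univ ∧ @Dense X (patchTopology X) D

/-- A subbasis: a covering family of open sets generating the topology. -/
def IsSubbasis {X : Type*} [t : TopologicalSpace X] (S : Set (Set X)) : Prop :=
  (∀ p ∈ S, IsOpen p) ∧ ⋃₀ S = Set.univ ∧ TopologicalSpace.generateFrom S = t

/-- The compact cover relation `⊢_⋐` on the finite subsets of a family `S` of
subsets of a space `X`: `F ⊢ G` iff `⋂F ⋐ ⋃G`. -/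
def subCover {X : Type*} [TopologicalSpace X] (S : Set (Set X)) :
    Finset ↥S → Finset ↥S → Prop := fun F G =>
  CompactlyContained (⋂ p ∈ F, (p : Set X)) (⋃ p ∈ G, (p : Set X))

/-- `∩`-roundness of a family of open sets. -/
def CapRound {X : Type*} [TopologicalSpace X] (S : Set (Set X)) : Prop :=
  ∀ p ∈ S, ∀ x ∈ p, ∃ F : Finset ↥S,
    x ∈ (⋂ q ∈ F, (q : Set X)) ∧ CompactlyContained (⋂ q ∈ F, (q : Set X)) p

/-- A pseudosubbasis: a `∩`-round, `T0`-separating family of open sets. -/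
def IsPseudoSubbasis {X : Type*} [TopologicalSpace X] (S : Set (Set X)) : Prop :=
  (∀ p ∈ S, IsOpen p) ∧ CapRound S ∧
    ∀ x y : X, x ≠ y → ∃ p ∈ S, (x ∈ p ∧ y ∉ p) ∨ (y ∈ p ∧ x ∉ p)

/-- A proximal map: continuous and preserving compact containment under preimages. -/
def Proximal {Y X : Type*} [TopologicalSpace Y] [TopologicalSpace X] (φ : Y → X) : Prop :=
  Continuous φ ∧ ∀ O N : Set X, IsOpen O → IsOpen N →
    CompactlyContained O N → CompactlyContained (φ ⁻¹' O) (φ ⁻¹' N)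

/-- `𝒬↓`: the finite sets `F` with `F ⊢ 𝒢_⋔` for some finite `𝒢 ⊆ 𝒬`. -/
def downSet {S : Type*} (r : Finset S → Finset S → Prop) (Q : Set (Finset S)) :
    Set (Finset S) :=
  {F | ∃ 𝒢 : Finset (Finset S), ↑𝒢 ⊆ Q ∧ ∀ H : Finset S, IsSelection 𝒢 H → r F H}

/-- Quasi-ideal: `𝒬 = 𝒬↓`. -/
def QuasiIdeal {S : Type*} (r : Finset S → Finset S → Prop) (Q : Set (Finset S)) : Prop :=
  downSet r Q = Q

/-- `G^⊣ = {F : F ⊢ G}`. -/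
def polar {S : Type*} (r : Finset S → Finset S → Prop) (G : Finset S) : Set (Finset S) :=
  {F | r F G}

/-- The way-below relation in the complete lattice of quasi-ideals (where the join
of a family `𝒟` is `(⋃₀𝒟)↓`): `Q ≪ R` iff every nonempty directed family of
quasi-ideals whose join contains `R` has a member containing `Q`. -/
def WayBelowQI {S : Type*} (r : Finset S → Finset S → Prop)
    (Q R : Set (Finset S)) : Prop :=
  ∀ 𝒟 : Set (Set (Finset S)), (∀ P ∈ 𝒟, QuasiIdeal r P) → 𝒟.Nonempty →
    DirectedOn (· ⊆ ·) 𝒟 → R ⊆ downSet r (⋃₀ 𝒟) → ∃ P ∈ 𝒟, Q ⊆ P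

/-!
For monotone `⊢`, cut-idempotence says exactly that every polar `G^⊣ = {F | F ⊢ G}` is a
quasi-ideal. Finite meets commute with `↓` on upward-closed families, so finite intersections of
quasi-ideals are quasi-ideals; in particular so is the quasi-ideal `𝒢↓` generated by a finite
family `𝒢`, being the intersection of the polars of the selections of `𝒢`, and hence so is every
`𝒬↓`. As `𝒬↓` is the directed union of the `𝒢↓` with `𝒢 ⊆ 𝒬↓` finite, `𝒫 ≪ 𝒬` means that
`𝒫 ⊆ 𝒢↓` for a finite `𝒢 ⊆ 𝒬`.

The Karoubi morphisms are `𝒮 ⊏ G :⟺ ⋀𝒮 ≪ G^⊣` and `F ⊏' 𝒯 :⟺ F ∈ ⋁𝒯`. All identities, and the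
cover relation axioms for `⊨`, then follow from two facts about quasi-ideals: finite meets
distribute over finite joins, `⋀_{H ∈ ℱ} ⋁H ⊆ ⋁_{K ⋔ ℱ} ⋀K`, and every element of a quasi-ideal
`𝒬` lies in a quasi-ideal way below `𝒬`.
-/

section Selections

variable {α : Type*}

def SelectionsContain (ℱ 𝒢 : Finset (Finset α)) : Prop :=
  ∀ K : Finset α, IsSelection ℱ K → ∃ I ∈ 𝒢, I ⊆ K

theorem exists_isSelection_forall_mem {ℱ : Finset (Finset α)} {p : α → Prop}
    (h : ∀ H ∈ ℱ, ∃ x ∈ H, p x) : ∃ K, IsSelection ℱ K ∧ ∀ x ∈ K, p x := by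
  refine ⟨(ℱ.biUnion id).filter p, fun H hH => ?_, fun x hx => (Finset.mem_filter.mp hx).2⟩
  obtain ⟨x, hxH, hx⟩ := h H hH
  exact ⟨x, hxH, Finset.mem_filter.mpr ⟨Finset.mem_biUnion.mpr ⟨H, hH, hxH⟩, hx⟩⟩

theorem SelectionsContain.symm {ℱ 𝒢 : Finset (Finset α)} (h : SelectionsContain ℱ 𝒢) :
    SelectionsContain 𝒢 ℱ := by
  intro H hH
  by_contra! hmiss
  obtain ⟨K, hK, hKH⟩ := exists_isSelection_forall_mem (p := (· ∉ H)) fun I hI =>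
    Finset.not_subset.mp (hmiss I hI)
  obtain ⟨I, hI, hIK⟩ := h K hK
  obtain ⟨x, hxI, hxH⟩ := hH I hI
  exact hKH x (hIK hxI) hxH

noncomputable def selections (𝒦 : Finset (Finset α)) : Finset (Finset α) :=
  (𝒦.biUnion id).powerset.filter (IsSelection 𝒦)

theorem mem_selections {𝒦 : Finset (Finset α)} {H : Finset α} :
    H ∈ selections 𝒦 ↔ H ⊆ 𝒦.biUnion id ∧ IsSelection 𝒦 H := by
  simp [selections]

theorem selectionsContain_selections (𝒦 : Finset (Finset α)) :
    SelectionsContain 𝒦 (selections 𝒦) := by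
  refine fun K hK => ⟨K ∩ 𝒦.biUnion id, mem_selections.mpr ⟨Finset.inter_subset_right,
    fun I hI => ?_⟩, Finset.inter_subset_left⟩
  obtain ⟨x, hxI, hxK⟩ := hK I hI
  exact ⟨x, hxI, Finset.mem_inter.mpr ⟨hxK, Finset.mem_biUnion.mpr ⟨I, hI, hxI⟩⟩⟩

theorem Set.biInter_biUnion_subset_of_selectionsContain {ι : Type*} {ℱ 𝒢 : Finset (Finset ι)}
    (h : SelectionsContain ℱ 𝒢) (Q : ι → Set α) :
    ⋂ H ∈ ℱ, ⋃ i ∈ H, Q i ⊆ ⋃ I ∈ 𝒢, ⋂ i ∈ I, Q i := by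
  intro x hx
  obtain ⟨K, hK, hxK⟩ := exists_isSelection_forall_mem (p := (x ∈ Q ·)) fun H hH => by
    simpa using Set.mem_iInter₂.mp hx H hH
  obtain ⟨I, hI, hIK⟩ := h K hK
  exact Set.mem_iUnion₂.mpr ⟨I, hI, Set.mem_iInter₂.mpr fun i hi => hxK i (hIK hi)⟩

end Selections

section Entailment

variable {A B C : Type*}

def EntailsSelections (r : Finset A → Finset B → Prop) (F : Finset A)
    (𝒢 : Finset (Finset B)) : Prop :=
  ∀ H, IsSelection 𝒢 H → r F H

theorem EntailsSelections.mono {r : Finset A → Finset B → Prop} {F : Finset A}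
    {𝒢 𝒦 : Finset (Finset B)} (h : EntailsSelections r F 𝒢) (h𝒢 : 𝒢 ⊆ 𝒦) :
    EntailsSelections r F 𝒦 :=
  fun H hH => h H fun I hI => hH I (h𝒢 hI)

theorem entailsSelections_of_selectionsContain {r : Finset A → Finset B → Prop}
    (hu : IsUpperRel r) {F : Finset A} {ℱ 𝒢 : Finset (Finset B)} (hF : ∀ H ∈ ℱ, r F H)
    (h : SelectionsContain ℱ 𝒢) : EntailsSelections r F 𝒢 := fun H hH =>
  let ⟨J, hJ, hJH⟩ := h.symm H hH
  hu F J H (hF J hJ) hJH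

theorem cutComp_iff {r : Finset A → Finset B → Prop} {s : Finset B → Finset C → Prop}
    (hu : IsUpperRel r) {F : Finset A} {G : Finset C} :
    CutComp r s F G ↔ ∃ 𝒢, EntailsSelections r F 𝒢 ∧ ∀ I ∈ 𝒢, s I G := by
  constructor
  · rintro ⟨ℱ, 𝒢, hF, h, hs⟩
    exact ⟨𝒢, entailsSelections_of_selectionsContain hu hF h, hs⟩
  · rintro ⟨𝒢, hF, hs⟩
    exact ⟨selections 𝒢, 𝒢, fun H hH => hF H (mem_selections.mp hH).2,
      (selectionsContain_selections 𝒢).symm, hs⟩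

theorem cutComp_of_forall_singleton {r : Finset A → Finset B → Prop}
    {s : Finset B → Finset C → Prop} {F : Finset A} {G : Finset C} {P : Finset B}
    (h₁ : r F P) (h₂ : ∀ b ∈ P, s {b} G) : CutComp r s F G := by
  refine ⟨{P}, P.image singleton, by simpa using h₁, fun K hK => ?_, by simpa using h₂⟩
  obtain ⟨b, hb, hbK⟩ := hK P (Finset.mem_singleton_self P)
  exact ⟨{b}, Finset.mem_image_of_mem _ hb, Finset.singleton_subset_iff.mpr hbK⟩

end Entailment

section QuasiIdeal

variable {S : Type*} {r : Finset S → Finset S → Prop}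

theorem mem_downSet_coe {𝒦 : Finset (Finset S)} {F : Finset S} :
    F ∈ downSet r ↑𝒦 ↔ EntailsSelections r F 𝒦 :=
  ⟨fun ⟨_, h𝒢, hF⟩ => EntailsSelections.mono hF (Finset.coe_subset.mp h𝒢),
    fun hF => ⟨𝒦, subset_rfl, hF⟩⟩

theorem downSet_mono {X Y : Set (Finset S)} (h : X ⊆ Y) : downSet r X ⊆ downSet r Y :=
  fun _ ⟨𝒦, h𝒦, hF⟩ => ⟨𝒦, h𝒦.trans h, hF⟩

theorem exists_finset_subset_downSet {X : Set (Finset S)} {𝒦 : Finset (Finset S)}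
    (h : ↑𝒦 ⊆ downSet r X) : ∃ 𝒢 : Finset (Finset S), ↑𝒢 ⊆ X ∧ ↑𝒦 ⊆ downSet r ↑𝒢 := by
  induction 𝒦 using Finset.induction_on with
  | empty => exact ⟨∅, by simp, by simp⟩
  | insert K 𝒦 _ ih =>
    rw [Finset.coe_insert, Set.insert_subset_iff] at h
    obtain ⟨ℒ, hℒ, hK⟩ := h.1
    obtain ⟨𝒢, h𝒢, h𝒦⟩ := ih h.2
    refine ⟨ℒ ∪ 𝒢, by simp [hℒ, h𝒢], ?_⟩
    rw [Finset.coe_insert, Set.insert_subset_iff]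
    exact ⟨downSet_mono (by simp) ⟨ℒ, subset_rfl, hK⟩, h𝒦.trans (downSet_mono (by simp))⟩

theorem isUpperSet_downSet (hl : IsLowerRel r) (X : Set (Finset S)) :
    IsUpperSet (downSet r X) :=
  fun F E hFE ⟨𝒦, h𝒦, hF⟩ => ⟨𝒦, h𝒦, fun H hH => hl F H E (hF H hH) hFE⟩

theorem QuasiIdeal.isUpperSet (hl : IsLowerRel r) {Q : Set (Finset S)} (hQ : QuasiIdeal r Q) :
    IsUpperSet Q :=
  hQ ▸ isUpperSet_downSet hl Q

theorem cutComp_iff_mem_downSet {C : Type*} {s : Finset S → Finset C → Prop}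
    (hu : IsUpperRel r) {F : Finset S} {G : Finset C} :
    CutComp r s F G ↔ F ∈ downSet r {I | s I G} := by
  rw [cutComp_iff hu]
  exact ⟨fun ⟨𝒢, hF, hs⟩ => ⟨𝒢, hs, hF⟩, fun ⟨𝒢, hs, hF⟩ => ⟨𝒢, hF, hs⟩⟩

theorem quasiIdeal_polar (hu : IsUpperRel r)
    (hidem : ∀ F G : Finset S, CutComp r r F G ↔ r F G) (G : Finset S) :
    QuasiIdeal r (polar r G) :=
  Set.ext fun F => (cutComp_iff_mem_downSet hu).symm.trans (hidem F G)

theorem downSet_inter_downSet_subset {X Y : Set (Finset S)}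
    (hX : IsUpperSet X) (hY : IsUpperSet Y) :
    downSet r X ∩ downSet r Y ⊆ downSet r (X ∩ Y) := by
  rintro F ⟨⟨𝒜, h𝒜, hF𝒜⟩, ⟨ℬ, hℬ, hFℬ⟩⟩
  refine ⟨Finset.image₂ (· ∪ ·) 𝒜 ℬ, fun K hK => ?_, fun H hH => ?_⟩
  · obtain ⟨A, hA, B, hB, rfl⟩ := Finset.mem_image₂.mp hK
    exact ⟨hX Finset.subset_union_left (h𝒜 hA), hY Finset.subset_union_right (hℬ hB)⟩
  by_cases h𝒜H : IsSelection 𝒜 H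
  · exact hF𝒜 H h𝒜H
  by_cases hℬH : IsSelection ℬ H
  · exact hFℬ H hℬH
  -- otherwise `H` misses some `A ∈ 𝒜` and some `B ∈ ℬ`, hence misses `A ∪ B`
  simp only [IsSelection, not_forall, not_exists, not_and] at h𝒜H hℬH
  obtain ⟨A, hA, hAH⟩ := h𝒜H
  obtain ⟨B, hB, hBH⟩ := hℬH
  obtain ⟨x, hx, hxH⟩ := hH _ (Finset.mem_image₂_of_mem hA hB)
  rcases Finset.mem_union.mp hx with hxA | hxB
  exacts [absurd hxH (hAH x hxA), absurd hxH (hBH x hxB)]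

theorem biInter_downSet_subset {ι : Type*} (s : Finset ι)
    {X : ι → Set (Finset S)} (hX : ∀ i ∈ s, IsUpperSet (X i)) :
    ⋂ i ∈ s, downSet r (X i) ⊆ downSet r (⋂ i ∈ s, X i) := by
  induction s using Finset.induction_on with
  | empty =>
    refine fun F _ => ⟨{∅}, by simp, fun H hH => ?_⟩
    simpa using hH ∅ (Finset.mem_singleton_self _)
  | insert a s _ ih =>
    have hs : ∀ i ∈ s, IsUpperSet (X i) := fun i hi => hX i (Finset.mem_insert_of_mem hi)
    simp only [Finset.set_biInter_insert]
    exact (Set.inter_subset_inter_right _ (ih hs)).trans <| downSet_inter_downSet_subset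
      (hX a (Finset.mem_insert_self a s)) (isUpperSet_iInter₂ hs)

theorem quasiIdeal_biInter (hl : IsLowerRel r) {ι : Type*} (s : Finset ι)
    {Q : ι → Set (Finset S)} (hQ : ∀ i ∈ s, QuasiIdeal r (Q i)) :
    QuasiIdeal r (⋂ i ∈ s, Q i) := by
  refine subset_antisymm (Set.subset_iInter₂ fun i hi => ?_) ?_
  · exact (downSet_mono (Set.biInter_subset_of_mem hi)).trans (hQ i hi).subset
  · calc ⋂ i ∈ s, Q i = ⋂ i ∈ s, downSet r (Q i) := Set.iInter₂_congr fun i hi => (hQ i hi).symm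
      _ ⊆ _ := biInter_downSet_subset s fun i hi => (hQ i hi).isUpperSet hl

theorem downSet_coe_eq_biInter_polar (hu : IsUpperRel r) (𝒢 : Finset (Finset S)) :
    downSet r ↑𝒢 = ⋂ H ∈ selections 𝒢, polar r H := by
  ext F
  simp only [mem_downSet_coe, Set.mem_iInter₂]
  exact ⟨fun hF H hH => hF H (mem_selections.mp hH).2,
    fun hF => entailsSelections_of_selectionsContain hu hF (selectionsContain_selections 𝒢).symm⟩

theorem quasiIdeal_downSet_coe (hu : IsUpperRel r) (hl : IsLowerRel r)
    (hidem : ∀ F G : Finset S, CutComp r r F G ↔ r F G) (𝒢 : Finset (Finset S)) :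
    QuasiIdeal r (downSet r ↑𝒢) := by
  rw [downSet_coe_eq_biInter_polar hu]
  exact quasiIdeal_biInter hl _ fun H _ => quasiIdeal_polar hu hidem H

theorem quasiIdeal_downSet (hu : IsUpperRel r) (hl : IsLowerRel r)
    (hidem : ∀ F G : Finset S, CutComp r r F G ↔ r F G) (X : Set (Finset S)) :
    QuasiIdeal r (downSet r X) := by
  refine subset_antisymm ?_ ?_
  · rintro F ⟨𝒦, h𝒦, hF⟩
    obtain ⟨𝒢, h𝒢, h𝒦𝒢⟩ := exists_finset_subset_downSet h𝒦
    have hF' : F ∈ downSet r (downSet r ↑𝒢) := downSet_mono h𝒦𝒢 (mem_downSet_coe.mpr hF)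
    rw [quasiIdeal_downSet_coe hu hl hidem] at hF'
    exact downSet_mono h𝒢 hF'
  · rintro F ⟨𝒢, h𝒢, hF⟩
    have hF' : F ∈ downSet r (downSet r ↑𝒢) := by
      rw [quasiIdeal_downSet_coe hu hl hidem]
      exact mem_downSet_coe.mpr hF
    exact downSet_mono (downSet_mono h𝒢) hF'

end QuasiIdeal

section FinitelyBelow

variable {S : Type*} {r : Finset S → Finset S → Prop} {A A' B B' : Set (Finset S)}

def FinitelyBelow (r : Finset S → Finset S → Prop) (A B : Set (Finset S)) : Prop :=
  ∃ 𝒢 : Finset (Finset S), ↑𝒢 ⊆ B ∧ A ⊆ downSet r ↑𝒢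

theorem FinitelyBelow.mono_left (h : FinitelyBelow r A B) (hA : A' ⊆ A) :
    FinitelyBelow r A' B :=
  let ⟨𝒢, h𝒢, hA𝒢⟩ := h
  ⟨𝒢, h𝒢, hA.trans hA𝒢⟩

theorem FinitelyBelow.mono_right (h : FinitelyBelow r A B) (hB : B ⊆ B') :
    FinitelyBelow r A B' :=
  let ⟨𝒢, h𝒢, hA𝒢⟩ := h
  ⟨𝒢, h𝒢.trans hB, hA𝒢⟩

theorem FinitelyBelow.subset (h : FinitelyBelow r A B) (hB : QuasiIdeal r B) : A ⊆ B :=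
  let ⟨_, h𝒢, hA𝒢⟩ := h
  hA𝒢.trans ((downSet_mono h𝒢).trans hB.subset)

theorem FinitelyBelow.of_subset_downSet (hu : IsUpperRel r) (hl : IsLowerRel r)
    (hidem : ∀ F G : Finset S, CutComp r r F G ↔ r F G) (h : FinitelyBelow r A' B)
    (hA : A ⊆ downSet r A') : FinitelyBelow r A B :=
  let ⟨𝒢, h𝒢, hA𝒢⟩ := h
  ⟨𝒢, h𝒢, hA.trans ((downSet_mono hA𝒢).trans (quasiIdeal_downSet_coe hu hl hidem 𝒢).subset)⟩

theorem finitelyBelow_biUnion {ι : Type*} (s : Finset ι) {A : ι → Set (Finset S)}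
    (h : ∀ i ∈ s, FinitelyBelow r (A i) B) : FinitelyBelow r (⋃ i ∈ s, A i) B := by
  induction s using Finset.induction_on with
  | empty => exact ⟨∅, by simp, by simp⟩
  | insert a s _ ih =>
    obtain ⟨𝒢, h𝒢, ha⟩ := h a (Finset.mem_insert_self a s)
    obtain ⟨ℋ, hℋ, hs⟩ := ih fun i hi => h i (Finset.mem_insert_of_mem hi)
    refine ⟨𝒢 ∪ ℋ, by simp [h𝒢, hℋ], ?_⟩
    rw [Finset.set_biUnion_insert]
    exact Set.union_subset (ha.trans (downSet_mono (by simp))) (hs.trans (downSet_mono (by simp)))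

theorem FinitelyBelow.exists_finset_between (hB : QuasiIdeal r B) (h : FinitelyBelow r A B) :
    ∃ 𝒱 : Finset (Finset S), ↑𝒱 ⊆ B ∧ FinitelyBelow r A (downSet r ↑𝒱) := by
  obtain ⟨𝒢, h𝒢, hA⟩ := h
  obtain ⟨𝒱, h𝒱, h𝒢𝒱⟩ := exists_finset_subset_downSet (h𝒢.trans hB.superset)
  exact ⟨𝒱, h𝒱, 𝒢, h𝒢𝒱, hA⟩

theorem wayBelowQI_iff_finitelyBelow (hu : IsUpperRel r) (hl : IsLowerRel r)
    (hidem : ∀ F G : Finset S, CutComp r r F G ↔ r F G) (hB : QuasiIdeal r B) :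
    WayBelowQI r A B ↔ FinitelyBelow r A B := by
  constructor
  · intro h
    -- `B` is the directed join of the quasi-ideals generated by its finite subfamilies
    let 𝒟 : Set (Set (Finset S)) := {P | ∃ 𝒢 : Finset (Finset S), ↑𝒢 ⊆ B ∧ P = downSet r ↑𝒢}
    have hcover : B ⊆ downSet r (⋃₀ 𝒟) := by
      refine hB.superset.trans (downSet_mono fun F hF => ?_)
      obtain ⟨𝒢, h𝒢, hF⟩ := hB.superset hF
      exact ⟨_, ⟨𝒢, h𝒢, rfl⟩, mem_downSet_coe.mpr hF⟩
    obtain ⟨_, ⟨𝒢, h𝒢, rfl⟩, hA⟩ := h 𝒟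
      (by rintro _ ⟨𝒢, -, rfl⟩; exact quasiIdeal_downSet_coe hu hl hidem 𝒢)
      ⟨_, ∅, by simp, rfl⟩
      (by
        rintro _ ⟨𝒢, h𝒢, rfl⟩ _ ⟨ℋ, hℋ, rfl⟩
        exact ⟨_, ⟨𝒢 ∪ ℋ, by simp [h𝒢, hℋ], rfl⟩, downSet_mono (by simp),
          downSet_mono (by simp)⟩)
      hcover
    exact ⟨𝒢, h𝒢, hA⟩
  · rintro ⟨𝒢, h𝒢, hA⟩ 𝒟 h𝒟 hne hdir hcov
    obtain ⟨𝒦, h𝒦, h𝒢𝒦⟩ := exists_finset_subset_downSet (h𝒢.trans hcov)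
    obtain ⟨P, hP, h𝒦P⟩ := DirectedOn.exists_mem_subset_of_finite_of_subset_sUnion hne hdir
      𝒦.finite_toSet h𝒦
    refine ⟨P, hP, hA.trans ?_⟩
    calc downSet r ↑𝒢 ⊆ downSet r (downSet r P) := downSet_mono (h𝒢𝒦.trans (downSet_mono h𝒦P))
      _ = P := by rw [h𝒟 P hP, h𝒟 P hP]

end FinitelyBelow

section QuasiIdeals

variable {S : Type*} {r : Finset S → Finset S → Prop}

abbrev QuasiIdeals (r : Finset S → Finset S → Prop) : Type _ :=
  {Q : Set (Finset S) // QuasiIdeal r Q}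

def meetQI (𝒮 : Finset (QuasiIdeals r)) : Set (Finset S) :=
  ⋂ Q ∈ 𝒮, Q.1

def joinQI (𝒯 : Finset (QuasiIdeals r)) : Set (Finset S) :=
  downSet r (⋃ Q ∈ 𝒯, Q.1)

theorem quasiIdeal_meetQI (hl : IsLowerRel r) (𝒮 : Finset (QuasiIdeals r)) :
    QuasiIdeal r (meetQI 𝒮) :=
  quasiIdeal_biInter hl 𝒮 fun Q _ => Q.2

theorem quasiIdeal_joinQI (hu : IsUpperRel r) (hl : IsLowerRel r)
    (hidem : ∀ F G : Finset S, CutComp r r F G ↔ r F G) (𝒯 : Finset (QuasiIdeals r)) :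
    QuasiIdeal r (joinQI 𝒯) :=
  quasiIdeal_downSet hu hl hidem _

theorem meetQI_singleton (Q : QuasiIdeals r) : meetQI {Q} = Q.1 := by
  simp [meetQI]

theorem joinQI_singleton (Q : QuasiIdeals r) : joinQI {Q} = Q.1 := by
  simp only [joinQI, Finset.mem_singleton, Set.iUnion_iUnion_eq_left]
  exact Q.2

theorem meetQI_insert [DecidableEq (QuasiIdeals r)] (Q : QuasiIdeals r)
    (𝒮 : Finset (QuasiIdeals r)) :
    meetQI (insert Q 𝒮) = Q.1 ∩ meetQI 𝒮 := by
  simp [meetQI]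

theorem meetQI_anti {𝒮 𝒮' : Finset (QuasiIdeals r)} (h : 𝒮 ⊆ 𝒮') : meetQI 𝒮' ⊆ meetQI 𝒮 :=
  Set.biInter_subset_biInter_left h

theorem joinQI_mono {𝒯 𝒯' : Finset (QuasiIdeals r)} (h : 𝒯 ⊆ 𝒯') : joinQI 𝒯 ⊆ joinQI 𝒯' :=
  downSet_mono (Set.biUnion_subset_biUnion_left h)

theorem subset_joinQI {Q : QuasiIdeals r} {𝒯 : Finset (QuasiIdeals r)} (hQ : Q ∈ 𝒯) :
    Q.1 ⊆ joinQI 𝒯 :=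
  Q.2.superset.trans (downSet_mono (Set.subset_biUnion_of_mem (u := fun Q => Q.1) hQ))

theorem exists_quasiIdeal_mem_finitelyBelow (hu : IsUpperRel r) (hl : IsLowerRel r)
    (hidem : ∀ F G : Finset S, CutComp r r F G ↔ r F G) {B : Set (Finset S)}
    (hB : QuasiIdeal r B) {F : Finset S} (hF : F ∈ B) :
    ∃ P : QuasiIdeals r, F ∈ P.1 ∧ FinitelyBelow r P.1 B := by
  obtain ⟨𝒱, h𝒱, hF𝒱⟩ := hB.superset hF
  exact ⟨⟨downSet r ↑𝒱, quasiIdeal_downSet_coe hu hl hidem 𝒱⟩, mem_downSet_coe.mpr hF𝒱,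
    𝒱, h𝒱, subset_rfl⟩

theorem FinitelyBelow.exists_quasiIdeal_between (hu : IsUpperRel r) (hl : IsLowerRel r)
    (hidem : ∀ F G : Finset S, CutComp r r F G ↔ r F G) {A B : Set (Finset S)}
    (hB : QuasiIdeal r B) (h : FinitelyBelow r A B) :
    ∃ P : QuasiIdeals r, FinitelyBelow r A P.1 ∧ FinitelyBelow r P.1 B := by
  obtain ⟨𝒱, h𝒱, hA𝒱⟩ := h.exists_finset_between hB
  exact ⟨⟨downSet r ↑𝒱, quasiIdeal_downSet_coe hu hl hidem 𝒱⟩, hA𝒱, 𝒱, h𝒱, subset_rfl⟩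

theorem biInter_joinQI_subset (hl : IsLowerRel r) {ℱ 𝒢 : Finset (Finset (QuasiIdeals r))}
    (h : SelectionsContain ℱ 𝒢) : ⋂ H ∈ ℱ, joinQI H ⊆ downSet r (⋃ I ∈ 𝒢, meetQI I) :=
  (biInter_downSet_subset ℱ fun _ _ => isUpperSet_iUnion₂ fun Q _ => Q.2.isUpperSet hl).trans
    (downSet_mono (Set.biInter_biUnion_subset_of_selectionsContain h _))

theorem biInter_joinQI_subset_of_selectionsContain (hl : IsLowerRel r)
    {ℱ 𝒢 : Finset (Finset (QuasiIdeals r))} (h : SelectionsContain ℱ 𝒢) {B : Set (Finset S)}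
    (hB : QuasiIdeal r B) (h𝒢 : ∀ I ∈ 𝒢, meetQI I ⊆ B) : ⋂ H ∈ ℱ, joinQI H ⊆ B :=
  (biInter_joinQI_subset hl h).trans ((downSet_mono (Set.iUnion₂_subset h𝒢)).trans hB.subset)

theorem FinitelyBelow.of_selectionsContain (hu : IsUpperRel r) (hl : IsLowerRel r)
    (hidem : ∀ F G : Finset S, CutComp r r F G ↔ r F G) {A B : Set (Finset S)}
    {ℱ 𝒢 : Finset (Finset (QuasiIdeals r))} (hA : ∀ H ∈ ℱ, FinitelyBelow r A (joinQI H))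
    (h : SelectionsContain ℱ 𝒢) (h𝒢 : ∀ I ∈ 𝒢, FinitelyBelow r (meetQI I) B) :
    FinitelyBelow r A B :=
  (finitelyBelow_biUnion 𝒢 h𝒢).of_subset_downSet hu hl hidem <|
    (Set.subset_iInter₂ fun H hH => (hA H hH).subset (quasiIdeal_joinQI hu hl hidem H)).trans
      (biInter_joinQI_subset hl h)

theorem exists_finset_finitelyBelow_cover (hu : IsUpperRel r) (hl : IsLowerRel r)
    (hidem : ∀ F G : Finset S, CutComp r r F G ↔ r F G) {𝒯 : Finset (QuasiIdeals r)}
    {𝒢 : Finset (Finset S)} (h𝒢 : ↑𝒢 ⊆ joinQI 𝒯) :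
    ∃ 𝒬 : Finset (QuasiIdeals r), ↑𝒢 ⊆ joinQI 𝒬 ∧ ∀ P ∈ 𝒬, ∃ T ∈ 𝒯, FinitelyBelow r P.1 T.1 := by
  obtain ⟨𝒲, h𝒲, h𝒢𝒲⟩ := exists_finset_subset_downSet h𝒢
  have hround : ∀ V ∈ 𝒲, ∃ P : QuasiIdeals r, V ∈ P.1 ∧ ∃ T ∈ 𝒯, FinitelyBelow r P.1 T.1 := by
    intro V hV
    obtain ⟨T, hT, hVT⟩ := Set.mem_iUnion₂.mp (h𝒲 hV)
    obtain ⟨P, hVP, hPT⟩ := exists_quasiIdeal_mem_finitelyBelow hu hl hidem T.2 hVT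
    exact ⟨P, hVP, T, hT, hPT⟩
  choose P hVP hPT using hround
  refine ⟨𝒲.attach.image fun V => P V.1 V.2, h𝒢𝒲.trans (downSet_mono fun V hV => ?_), ?_⟩
  · exact Set.mem_iUnion₂.mpr ⟨P V hV, Finset.mem_image_of_mem _ (Finset.mem_attach _ ⟨V, hV⟩),
      hVP V hV⟩
  · intro Q hQ
    obtain ⟨⟨V, hV⟩, -, rfl⟩ := Finset.mem_image.mp hQ
    exact hPT V hV

end QuasiIdeals

section Karoubi

variable {S : Type*} {r : Finset S → Finset S → Prop}

theorem finitelyBelow_iff_exists_selectionsContain (hu : IsUpperRel r)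
    (hidem : ∀ F G : Finset S, CutComp r r F G ↔ r F G) {A B : Set (Finset S)}
    (hB : QuasiIdeal r B) :
    FinitelyBelow r A B ↔ ∃ ℱ 𝒢 : Finset (Finset S),
      (∀ H ∈ ℱ, FinitelyBelow r A (polar r H)) ∧ SelectionsContain ℱ 𝒢 ∧ ∀ I ∈ 𝒢, I ∈ B := by
  constructor
  · intro h
    obtain ⟨𝒱, h𝒱, hA𝒱⟩ := h.exists_finset_between hB
    refine ⟨selections 𝒱, 𝒱, fun H hH => hA𝒱.mono_right fun F hF => ?_,
      (selectionsContain_selections 𝒱).symm, fun I hI => h𝒱 hI⟩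
    exact mem_downSet_coe.mp hF H (mem_selections.mp hH).2
  · rintro ⟨ℱ, 𝒢, hA, h, h𝒢⟩
    refine ⟨𝒢, h𝒢, fun F hF => mem_downSet_coe.mpr ?_⟩
    exact entailsSelections_of_selectionsContain hu
      (fun H hH => (hA H hH).subset (quasiIdeal_polar hu hidem H) hF) h

def qiCover (r : Finset S → Finset S → Prop) (𝒮 𝒯 : Finset (QuasiIdeals r)) : Prop :=
  FinitelyBelow r (meetQI 𝒮) (joinQI 𝒯)

def qiToBase (r : Finset S → Finset S → Prop) (𝒮 : Finset (QuasiIdeals r)) (G : Finset S) :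
    Prop :=
  FinitelyBelow r (meetQI 𝒮) (polar r G)

def baseToQI (r : Finset S → Finset S → Prop) (F : Finset S) (𝒯 : Finset (QuasiIdeals r)) :
    Prop :=
  F ∈ joinQI 𝒯

theorem qiCover_divisible (hu : IsUpperRel r) (hl : IsLowerRel r)
    (hidem : ∀ F G : Finset S, CutComp r r F G ↔ r F G) : Divisible (qiCover r) := by
  rintro 𝒮 𝒯 ⟨𝒢, h𝒢, hA⟩
  obtain ⟨𝒬, h𝒢𝒬, h𝒬⟩ := exists_finset_finitelyBelow_cover hu hl hidem h𝒢
  refine cutComp_of_forall_singleton ⟨𝒢, h𝒢𝒬, hA⟩ fun P hP => ?_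
  obtain ⟨T, hT, hPT⟩ := h𝒬 P hP
  exact ⟨T, hT, by rwa [qiCover, meetQI_singleton, joinQI_singleton]⟩

theorem qiCover_auxiliaryTo (hu : IsUpperRel r) (hl : IsLowerRel r)
    (hidem : ∀ F G : Finset S, CutComp r r F G ↔ r F G) :
    AuxiliaryTo (qiCover r) (Vdash (qiCover r)) := by
  intro 𝒮 ℋ 𝒯 hins hvd
  have hM := quasiIdeal_meetQI hl 𝒮
  -- `⊩` applied to a quasi-ideal `P ∋ F` way below `⋀𝒮` puts `F` into `⋁ℋ`
  have h𝒮ℋ : meetQI 𝒮 ⊆ joinQI ℋ := by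
    intro F hF
    obtain ⟨P, hFP, hP⟩ := exists_quasiIdeal_mem_finitelyBelow hu hl hidem hM hF
    have hPℋ : qiCover r {P} ℋ := hvd {P} fun Q hQ => by
      rw [qiCover, meetQI_singleton, joinQI_singleton]
      exact hP.mono_right (Set.biInter_subset_of_mem hQ)
    exact hPℋ.subset (quasiIdeal_joinQI hu hl hidem ℋ) (by rwa [meetQI_singleton])
  refine (finitelyBelow_biUnion ℋ hins).of_subset_downSet hu hl hidem ?_
  calc meetQI 𝒮 ⊆ downSet r (meetQI 𝒮) ∩ downSet r (⋃ Q ∈ ℋ, Q.1) :=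
        Set.subset_inter hM.superset h𝒮ℋ
    _ ⊆ downSet r (meetQI 𝒮 ∩ ⋃ Q ∈ ℋ, Q.1) := downSet_inter_downSet_subset (hM.isUpperSet hl)
        (isUpperSet_iUnion₂ fun Q _ => Q.2.isUpperSet hl)
    _ ⊆ _ := downSet_mono fun F ⟨hF𝒮, hFℋ⟩ => by
        obtain ⟨Q, hQ, hFQ⟩ := Set.mem_iUnion₂.mp hFℋ
        exact Set.mem_iUnion₂.mpr ⟨Q, hQ, by simp only [meetQI_insert]; exact ⟨hFQ, hF𝒮⟩⟩

theorem coverRelation_qiCover (hu : IsUpperRel r) (hl : IsLowerRel r)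
    (hidem : ∀ F G : Finset S, CutComp r r F G ↔ r F G) : CoverRelation (qiCover r) :=
  ⟨⟨fun _ _ _ h h𝒯 => h.mono_right (joinQI_mono h𝒯),
    fun _ _ _ h h𝒮 => h.mono_left (meetQI_anti h𝒮),
    fun _ _ ⟨_, _, hℱ, h, h𝒢⟩ => FinitelyBelow.of_selectionsContain hu hl hidem hℱ h h𝒢,
    qiCover_divisible hu hl hidem⟩, qiCover_auxiliaryTo hu hl hidem⟩

theorem cutComp_qiToBase_rel (hu : IsUpperRel r)
    (hidem : ∀ F G : Finset S, CutComp r r F G ↔ r F G) :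
    CutComp (qiToBase r) r = qiToBase r :=
  funext₂ fun _ G => propext
    (finitelyBelow_iff_exists_selectionsContain hu hidem (quasiIdeal_polar hu hidem G)).symm

theorem cutComp_qiCover_qiToBase (hu : IsUpperRel r) (hl : IsLowerRel r)
    (hidem : ∀ F G : Finset S, CutComp r r F G ↔ r F G) :
    CutComp (qiCover r) (qiToBase r) = qiToBase r := by
  funext 𝒮 G
  refine propext ⟨fun ⟨ℱ, 𝒢, hℱ, h, h𝒢⟩ => FinitelyBelow.of_selectionsContain hu hl hidem hℱ h h𝒢,
    fun h => ?_⟩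
  obtain ⟨P, h𝒮P, hPG⟩ := h.exists_quasiIdeal_between hu hl hidem (quasiIdeal_polar hu hidem G)
  refine cutComp_of_forall_singleton (P := {P}) ?_ (by simpa [qiToBase, meetQI_singleton])
  rwa [qiCover, joinQI_singleton]

theorem cutComp_baseToQI_qiCover (hu : IsUpperRel r) (hl : IsLowerRel r)
    (hidem : ∀ F G : Finset S, CutComp r r F G ↔ r F G) :
    CutComp (baseToQI r) (qiCover r) = baseToQI r := by
  funext F 𝒯
  refine propext ⟨fun ⟨ℱ, 𝒢, hℱ, h, h𝒢⟩ => ?_, fun hF => ?_⟩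
  · exact biInter_joinQI_subset_of_selectionsContain hl h (quasiIdeal_joinQI hu hl hidem 𝒯)
      (fun I hI => (h𝒢 I hI).subset (quasiIdeal_joinQI hu hl hidem 𝒯))
      (Set.mem_iInter₂.mpr hℱ)
  · obtain ⟨𝒬, hF𝒬, h𝒬⟩ := exists_finset_finitelyBelow_cover hu hl hidem
      (Finset.coe_singleton F ▸ Set.singleton_subset_iff.mpr hF)
    refine cutComp_of_forall_singleton (hF𝒬 (Finset.mem_coe.mpr (Finset.mem_singleton_self F)))
      fun P hP => ?_
    obtain ⟨T, hT, hPT⟩ := h𝒬 P hP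
    rw [qiCover, meetQI_singleton]
    exact hPT.mono_right (subset_joinQI hT)

theorem cutComp_rel_baseToQI (hu : IsUpperRel r) (hl : IsLowerRel r)
    (hidem : ∀ F G : Finset S, CutComp r r F G ↔ r F G) :
    CutComp r (baseToQI r) = baseToQI r :=
  funext₂ fun F 𝒯 => propext <|
    (cutComp_iff_mem_downSet hu).trans (Set.ext_iff.mp (quasiIdeal_joinQI hu hl hidem 𝒯) F)

theorem cutComp_baseToQI_qiToBase (hu : IsUpperRel r) (hl : IsLowerRel r)
    (hidem : ∀ F G : Finset S, CutComp r r F G ↔ r F G) :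
    CutComp (baseToQI r) (qiToBase r) = r := by
  funext F G
  refine propext ⟨fun ⟨ℱ, 𝒢, hℱ, h, h𝒢⟩ => ?_, fun hFG => ?_⟩
  · exact biInter_joinQI_subset_of_selectionsContain hl h (quasiIdeal_polar hu hidem G)
      (fun I hI => (h𝒢 I hI).subset (quasiIdeal_polar hu hidem G)) (Set.mem_iInter₂.mpr hℱ)
  · obtain ⟨P, hFP, hPG⟩ := exists_quasiIdeal_mem_finitelyBelow hu hl hidem
      (quasiIdeal_polar hu hidem G) hFG
    refine cutComp_of_forall_singleton (P := {P}) ?_ (by simpa [qiToBase, meetQI_singleton])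
    rwa [baseToQI, joinQI_singleton]

theorem cutComp_qiToBase_baseToQI (hu : IsUpperRel r) (hl : IsLowerRel r)
    (hidem : ∀ F G : Finset S, CutComp r r F G ↔ r F G) :
    CutComp (qiToBase r) (baseToQI r) = qiCover r :=
  funext₂ fun _ 𝒯 => propext
    (finitelyBelow_iff_exists_selectionsContain hu hidem (quasiIdeal_joinQI hu hl hidem 𝒯)).symm

end Karoubi

/-- **Every monotone cut-idempotent is Karoubi isomorphic to a cover relation on the
finite sets of quasi-ideals.** -/
theorem karoubi_isomorphic {S : Type*} (r : Finset S → Finset S → Prop)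
    (hu : IsUpperRel r) (hl : IsLowerRel r)
    (hidem : ∀ F G : Finset S, CutComp r r F G ↔ r F G) :
    ∀ vD : Finset {Q : Set (Finset S) // QuasiIdeal r Q} →
           Finset {Q : Set (Finset S) // QuasiIdeal r Q} → Prop,
      (∀ 𝒮 𝒯, vD 𝒮 𝒯 ↔
        WayBelowQI r (⋂ Q ∈ 𝒮, (Q : {Q : Set (Finset S) // QuasiIdeal r Q}).1)
          (downSet r (⋃ Q ∈ 𝒯, (Q : {Q : Set (Finset S) // QuasiIdeal r Q}).1))) →
      CoverRelation vD ∧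
      ∃ (sq : Finset {Q : Set (Finset S) // QuasiIdeal r Q} → Finset S → Prop)
        (sq' : Finset S → Finset {Q : Set (Finset S) // QuasiIdeal r Q} → Prop),
        sq = CutComp sq r ∧ sq = CutComp vD sq ∧
        sq' = CutComp sq' vD ∧ sq' = CutComp r sq' ∧
        CutComp sq' sq = r ∧ CutComp sq sq' = vD := by
  intro vD hvD
  obtain rfl : vD = qiCover r := funext₂ fun 𝒮 𝒯 => propext <| (hvD 𝒮 𝒯).trans
    (wayBelowQI_iff_finitelyBelow hu hl hidem (quasiIdeal_joinQI hu hl hidem 𝒯))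
  exact ⟨coverRelation_qiCover hu hl hidem, qiToBase r, baseToQI r,
    (cutComp_qiToBase_rel hu hidem).symm, (cutComp_qiCover_qiToBase hu hl hidem).symm,
    (cutComp_baseToQI_qiCover hu hl hidem).symm, (cutComp_rel_baseToQI hu hl hidem).symm,
    cutComp_baseToQI_qiToBase hu hl hidem, cutComp_qiToBase_baseToQI hu hl hidem⟩
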